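/- If a sequence S(s) satisfies the machine-dwell property (every maximal run of a machine node m entered from a different node has length at least L_m) and a part traverses S(s) advancing at most one position per step and never skipping positions, then between entering machine m and leaving it the part spends at least L_m time steps at m. -/
import Mathlib


/-- if a sequence `f` (position ↦ node) satisfies the
machine-dwell property for machine `m` with duration `L`, and a part traverses
it advancing at most one position per step, then between entering `m` and
leaving it the part spends at least `L` time steps at `m`. -/
theorem machine_dwell_time {V : Type*} (m : V) (L : ℕ)
    (f : ℕ → V) (p : ℕ → ℕ)
    (hstep : ∀ k, p (k+1) = p k ∨ p (k+1) = p k + 1)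
    (hdwell : ∀ q, 1 ≤ q → f q = m → f (q-1) ≠ m → ∀ j < L, f (q + j) = m)
    (k k' : ℕ) (hk : 1 ≤ k) (hkk' : k < k')
    (henter : f (p k) = m) (hprev : f (p (k-1)) ≠ m)
    (hstay : ∀ s, k ≤ s → s < k' → f (p s) = m)
    (hleave : f (p k') ≠ m) :
    L ≤ k' - k := by
  by_contra h
  push_neg at h
  -- p k = p (k-1) + 1
  have hek : k - 1 + 1 = k := Nat.sub_add_cancel hk
  have hpk : p k = p (k-1) + 1 := by
    rcases hstep (k-1) with h1 | h1 <;> rw [hek] at h1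
    · exact absurd (h1 ▸ henter) hprev
    · exact h1
  have hpk1 : 1 ≤ p k := by omega
  have hall : ∀ j < L, f (p k + j) = m := by
    refine hdwell (p k) hpk1 henter ?_
    have : p k - 1 = p (k-1) := by omega
    rw [this]; exact hprev
  -- bounds on p k'
  have hbound : ∀ b, p k ≤ p (k + b) ∧ p (k + b) ≤ p k + b := by
    intro b
    induction b with
    | zero => simp
    | succ n ih =>
      rcases hstep (k + n) with h1 | h1 <;>
        · rw [show k + (n+1) = k + n + 1 from rfl, h1]; omega
  have hb := hbound (k' - k)
  rw [show k + (k' - k) = k' by omega] at hb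
  have : f (p k') = m := by
    have := hall (p k' - p k) (by omega)
    rwa [show p k + (p k' - p k) = p k' by omega] at this
  exact hleave this
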